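/- Let A₀ = uBu + K(H) where B = C*_r(F₂) ⊕ 0 acts on H = H₁ ⊕ H₂ (with H₁ ≅ ℓ²(F₂) carrying the left regular representation and B acting as 0 on H₂), and u is the self-adjoint unitary interchanging the even/odd basis structure as above. Let C₀ be the C*-algebra generated by the diagonal projections {e_{ii} : i ∈ ℕ} (without the identity). Then A₀ is non-unital and C₀ is a maximal abelian subalgebra of A₀. -/

import Mathlib

set_option maxHeartbeats 1000000
set_option synthInstance.maxHeartbeats 1000000

open scoped ComplexOrder TensorProduct

noncomputable section

/-- A state on a (possibly non-unital) normed star algebra: a norm-one positive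
continuous linear functional. -/
def IsState {A : Type*} [NonUnitalNormedRing A] [StarRing A] [NormedSpace ℂ A]
    (φ : A →L[ℂ] ℂ) : Prop :=
  ‖φ‖ = 1 ∧ ∀ a : A, 0 ≤ φ (star a * a)

/-- A pure state: a state which is an extreme point of the state space. -/
def IsPureState {A : Type*} [NonUnitalNormedRing A] [StarRing A] [NormedSpace ℂ A]
    (φ : A →L[ℂ] ℂ) : Prop :=
  IsState φ ∧ ∀ (ψ₁ ψ₂ : A →L[ℂ] ℂ) (t : ℝ), IsState ψ₁ → IsState ψ₂ → 0 < t → t < 1 →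
    φ = (t : ℂ) • ψ₁ + ((1 : ℂ) - (t : ℂ)) • ψ₂ → ψ₁ = φ ∧ ψ₂ = φ

/-- A maximal abelian self-adjoint subalgebra (masa) of a (possibly non-unital)
C*-algebra: an abelian *-subalgebra equal to its own relative commutant. -/
def IsMasa {A : Type*} [NonUnitalCStarAlgebra A] (C : NonUnitalStarSubalgebra ℂ A) : Prop :=
  (∀ x ∈ C, ∀ y ∈ C, x * y = y * x) ∧ ∀ x : A, (∀ c ∈ C, c * x = x * c) → x ∈ C

/-- A masa of a unital C*-algebra (unital version). -/
def IsMasaU {A : Type*} [CStarAlgebra A] (C : StarSubalgebra ℂ A) : Prop :=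
  (∀ x ∈ C, ∀ y ∈ C, x * y = y * x) ∧ ∀ x : A, (∀ c ∈ C, c * x = x * c) → x ∈ C

/-- The Kadison-Singer extension property for a subalgebra of a possibly non-unital
C*-algebra: (i) every pure state (character) of `C` has a unique pure state extension
to `A`, and (ii) no pure state of `A` annihilates `C`. -/
def HasExtensionProperty {A : Type*} [NonUnitalCStarAlgebra A]
    (C : NonUnitalStarSubalgebra ℂ A) : Prop :=
  (∀ χ : ↥C →L[ℂ] ℂ, IsPureState χ →
      ∃! φ : A →L[ℂ] ℂ, IsPureState φ ∧ ∀ c : ↥C, φ ↑c = χ c) ∧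
  ∀ φ : A →L[ℂ] ℂ, IsPureState φ → ∃ c ∈ C, φ c ≠ 0

/-- The extension property for a unital subalgebra of a unital C*-algebra: every pure
state (character) of `C` has a unique pure state extension to `A`. -/
def HasExtensionPropertyU {A : Type*} [CStarAlgebra A] (C : StarSubalgebra ℂ A) : Prop :=
  ∀ χ : ↥C →L[ℂ] ℂ, IsPureState χ →
    ∃! φ : A →L[ℂ] ℂ, IsPureState φ ∧ ∀ c : ↥C, φ ↑c = χ c

/-- A C*-completion `T` of the algebraic tensor product `A₁ ⊙ A₂` with respect to a
C*-norm `β`: a C*-algebra together with commuting isometric embeddings of the factors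
such that the induced map on the algebraic tensor product is injective (i.e. the norm
of `T` restricts to a genuine C*-norm on `A₁ ⊙ A₂`) and has dense range. -/
structure CStarCompletion (A₁ A₂ T : Type*) [NonUnitalCStarAlgebra A₁]
    [NonUnitalCStarAlgebra A₂] [NonUnitalCStarAlgebra T] where
  ι₁ : A₁ →⋆ₙₐ[ℂ] T
  ι₂ : A₂ →⋆ₙₐ[ℂ] T
  isometry₁ : Isometry ι₁
  isometry₂ : Isometry ι₂
  commutes : ∀ (a : A₁) (b : A₂), ι₁ a * ι₂ b = ι₂ b * ι₁ a
  injective : ∀ (n : ℕ) (a : Fin n → A₁) (b : Fin n → A₂),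
      (∑ i, ι₁ (a i) * ι₂ (b i)) = 0 → (∑ i, a i ⊗ₜ[ℂ] b i : A₁ ⊗[ℂ] A₂) = 0
  dense_span : Dense (Submodule.span ℂ {x : T | ∃ a b, x = ι₁ a * ι₂ b} : Set T)

/-- The closure, in a C*-completion `T` of `A₁ ⊙ A₂`, of the linear span of the
elementary tensors `c₁ ⊗ c₂` with `cᵢ` in given subsets of the factors: this is the
canonical copy of `C₁ ⊗ C₂` inside `A₁ ⊗_β A₂`. -/
def tensorSet {A₁ A₂ T : Type*} [NonUnitalCStarAlgebra A₁] [NonUnitalCStarAlgebra A₂]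
    [NonUnitalCStarAlgebra T] (K : CStarCompletion A₁ A₂ T)
    (S₁ : Set A₁) (S₂ : Set A₂) : Set T :=
  closure (Submodule.span ℂ {x : T | ∃ a ∈ S₁, ∃ b ∈ S₂, x = K.ι₁ a * K.ι₂ b} : Set T)

/-- The canonical copy of `C₁ ⊗ C₂` inside `A₁ ⊗_β A₂`, as a closed non-unital
star subalgebra. -/
def tensorSubalg {A₁ A₂ T : Type*} [NonUnitalCStarAlgebra A₁] [NonUnitalCStarAlgebra A₂]
    [NonUnitalCStarAlgebra T] (K : CStarCompletion A₁ A₂ T)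
    (C₁ : NonUnitalStarSubalgebra ℂ A₁) (C₂ : NonUnitalStarSubalgebra ℂ A₂) :
    NonUnitalStarSubalgebra ℂ T :=
  (NonUnitalStarAlgebra.adjoin ℂ
    {x : T | ∃ a ∈ C₁, ∃ b ∈ C₂, x = K.ι₁ a * K.ι₂ b}).topologicalClosure

/-- A (two-sided) bounded approximate identity indexed by a directed set. -/
def IsApproxIdentity {A : Type*} [NonUnitalCStarAlgebra A] {ι : Type}
    [Preorder ι] (e : ι → A) : Prop :=
  (∀ i, ‖e i‖ ≤ 1) ∧ ∀ a : A,
    Filter.Tendsto (fun i => e i * a) Filter.atTop (nhds a) ∧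
    Filter.Tendsto (fun i => a * e i) Filter.atTop (nhds a)

/-- `S` contains a bounded approximate identity for `A`. -/
def ContainsApproxIdentity {A : Type*} [NonUnitalCStarAlgebra A] (S : Set A) : Prop :=
  ∃ (ι : Type) (_ : SemilatticeSup ι) (_ : Nonempty ι) (e : ι → A),
    (∀ i, e i ∈ S) ∧ IsApproxIdentity e

/-! ### Concrete setup: the free group `F₂`, `ℓ²(F₂)` and `B(ℓ²(F₂))` -/

/-- The free group on two generators. -/
abbrev G2 := FreeGroup (Fin 2)

/-- The Hilbert space `ℓ²(F₂)`. -/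
abbrev H2 := lp (fun _ : G2 => ℂ) 2

/-- The canonical orthonormal basis vector `ξ_g` of `ℓ²(F₂)`. -/
def xi (g : G2) : H2 := lp.single 2 g 1

/-- The rank-one operator `e_{g,h} : ξ ↦ ⟨ξ, ξ_h⟩ ξ_g` on `ℓ²(F₂)`; `e_{g,g}` is the
orthogonal projection onto `ℂ ξ_g`. -/
def EE (g h : G2) : H2 →L[ℂ] H2 := (innerSL ℂ (xi h)).smulRight (xi g)

/-- The reduced group C*-algebra `C*_r(F₂)`: the C*-subalgebra of `B(ℓ²(F₂))` generated
by the left regular representation `lam`. -/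
def CrS (lam : G2 → (H2 →L[ℂ] H2)) : StarSubalgebra ℂ (H2 →L[ℂ] H2) :=
  (StarAlgebra.adjoin ℂ (Set.range lam)).topologicalClosure

/-- The C*-algebra `A = C*_r(F₂) + K(ℓ²(F₂))`, as a subset of `B(ℓ²(F₂))`. -/
def Acar (lam : G2 → (H2 →L[ℂ] H2)) : Set (H2 →L[ℂ] H2) :=
  {x | ∃ a ∈ CrS lam, ∃ k : H2 →L[ℂ] H2, IsCompactOperator k ∧ x = a + k}

/-- The atomic masa `C`: the C*-algebra generated by the diagonal projections
`{e_g : g ∈ F₂}` together with `1`. -/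
def CS : StarSubalgebra ℂ (H2 →L[ℂ] H2) :=
  (StarAlgebra.adjoin ℂ (Set.range fun g : G2 => EE g g)).topologicalClosure

/-! ### Concrete setup: `ℓ²(ℕ)` with its standard basis, and the unitary `u` -/

/-- The Hilbert space `ℓ²(ℕ)`. -/
abbrev HN := lp (fun _ : ℕ => ℂ) 2

/-- The standard orthonormal basis vector `ξ_i` of `ℓ²(ℕ)`. -/
def xiN (i : ℕ) : HN := lp.single 2 i 1

/-- The rank-one operator `e_{i,j} : ξ ↦ ⟨ξ, ξ_j⟩ ξ_i` on `ℓ²(ℕ)`. -/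
def EN (i j : ℕ) : HN →L[ℂ] HN := (innerSL ℂ (xiN j)).smulRight (xiN i)

/-- That `u : B(ℓ²(ℕ))` acts on the basis by `u ξ_{2i} = (ξ_{2i} + ξ_{2i+1})/√2` and
`u ξ_{2i+1} = (ξ_{2i} − ξ_{2i+1})/√2` (the even/odd indices playing the roles of the
indices `2i`, `2i−1` of the paper). -/
def IsHadamardPairing (u : HN →L[ℂ] HN) : Prop :=
  (∀ i : ℕ, u (xiN (2 * i)) = ((Real.sqrt 2)⁻¹ : ℝ) • (xiN (2 * i) + xiN (2 * i + 1))) ∧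
  (∀ i : ℕ, u (xiN (2 * i + 1)) = ((Real.sqrt 2)⁻¹ : ℝ) • (xiN (2 * i) - xiN (2 * i + 1)))

/-- The closed subspace `H₁` spanned by the even basis vectors. -/
def Heven : Submodule ℂ HN :=
  (Submodule.span ℂ (Set.range fun i : ℕ => xiN (2 * i))).topologicalClosure

/-! ### The algebra `A₀ = uBu + K(H)` of section 3.2 -/

/-- Conjugation of an operator on `ℓ²(F₂)` into an operator on `ℓ²(ℕ)` supported on the
even-index subspace `H₁`, via an isometry `V : ℓ²(F₂) → ℓ²(ℕ)` with range `H₁`: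
this realizes `B = C*_r(F₂) ⊕ 0`. -/
def iotaV (V : H2 →L[ℂ] HN) : (H2 →L[ℂ] H2) → (HN →L[ℂ] HN) :=
  fun a => V ∘L a ∘L (ContinuousLinearMap.adjoint V)

/-- The set `A₀ = uBu + K(H)`. -/
def A0car (lam : G2 → (H2 →L[ℂ] H2)) (V : H2 →L[ℂ] HN) (u : HN →L[ℂ] HN) :
    Set (HN →L[ℂ] HN) :=
  {x | ∃ a ∈ CrS lam, ∃ k : HN →L[ℂ] HN, IsCompactOperator k ∧ x = u * iotaV V a * u + k}

/-- `C₀`: the (non-unital) C*-algebra generated by the diagonal rank-one projections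
`e_{ii}`, `i ∈ ℕ`. -/
def C0S : NonUnitalStarSubalgebra ℂ (HN →L[ℂ] HN) :=
  (NonUnitalStarAlgebra.adjoin ℂ (Set.range fun i : ℕ => EN i i)).topologicalClosure

/-!
Conjugation by `u` spreads each even basis vector `ξ_{2j}` evenly over `ξ_{2j}` and `ξ_{2j+1}`,
so for every operator `b` supported on `H₁` the rows `2i` and `2i+1` of `u b u` coincide. For
`x = u b u + k ∈ A₀` the difference of these two rows is therefore that of the compact operator
`k`, and it tends to `0` along the basis. If `x` commutes with every `e_{ii}` it is diagonal,
`x ξ_n = μ_n ξ_n`, and `|μ_n|` is exactly this row difference in the column `ξ_n`; so `μ_n → 0`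
and `x ∈ C₀`. A unit of `A₀` would fix each `e_{ii} ∈ C₀ ⊆ A₀`, hence be diagonal with `μ = 1`.
-/

open Filter Topology InnerProductSpace

section General

variable {𝕜 : Type*} [RCLike 𝕜]

theorem Orthonormal.tendsto_inner_left {E : Type*} [NormedAddCommGroup E] [InnerProductSpace 𝕜 E]
    {e : ℕ → E} (he : Orthonormal 𝕜 e) (x : E) :
    Tendsto (fun n => inner 𝕜 (e n) x) atTop (𝓝 0) := by
  rw [tendsto_zero_iff_norm_tendsto_zero]
  have := (he.inner_products_summable x).tendsto_atTop_zero.sqrt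
  simpa [Real.sqrt_sq (norm_nonneg _)] using this

theorem IsCompactOperator.tendsto_apply_orthonormal {E F : Type*}
    [NormedAddCommGroup E] [InnerProductSpace 𝕜 E] [CompleteSpace E]
    [NormedAddCommGroup F] [InnerProductSpace 𝕜 F] [CompleteSpace F]
    {T : E →L[𝕜] F} (hT : IsCompactOperator T) {e : ℕ → E} (he : Orthonormal 𝕜 e) :
    Tendsto (fun n => T (e n)) atTop (𝓝 0) := by
  obtain ⟨K, hK, hTK⟩ := hT.image_closedBall_subset_compact (𝕜₁ := 𝕜) (f := (T : E →ₗ[𝕜] F)) 1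
  have hmem : ∀ n, T (e n) ∈ K := fun n => hTK ⟨e n, by simp [he.1 n], rfl⟩
  refine hK.tendsto_nhds_of_unique_mapClusterPt (Eventually.of_forall hmem) fun w _ hw => ?_
  obtain ⟨ψ, hψ, hlim⟩ := hw.tendsto_subseq
  have hweak : Tendsto (fun n => inner 𝕜 w (T (e n))) atTop (𝓝 0) := by
    simp_rw [← ContinuousLinearMap.adjoint_inner_left]
    simpa [Function.comp_def] using
      (RCLike.continuous_conj.tendsto 0).comp (he.tendsto_inner_left (T.adjoint w))
  exact inner_self_eq_zero.1 <| tendsto_nhds_unique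
    (((innerSL 𝕜 w).continuous.tendsto w).comp hlim) (hweak.comp hψ.tendsto_atTop)

theorem lp.continuousLinearMap_ext_single {ι F : Type*} [DecidableEq ι]
    [NormedAddCommGroup F] [NormedSpace 𝕜 F] {f g : lp (fun _ : ι => 𝕜) 2 →L[𝕜] F}
    (h : ∀ i, f (lp.single 2 i 1) = g (lp.single 2 i 1)) : f = g :=
  lp.ext_continuousLinearMap (by norm_num) fun i => ContinuousLinearMap.ext_ring (h i)

theorem ContinuousLinearMap.isCompactOperator_smulRight {E F : Type*}
    [NormedAddCommGroup E] [NormedSpace 𝕜 E] [NormedAddCommGroup F] [NormedSpace 𝕜 F]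
    (f : E →L[𝕜] 𝕜) (v : F) : IsCompactOperator (f.smulRight v) :=
  (isCompactOperator_of_locallyCompactSpace_rng
    ((ContinuousLinearMap.id 𝕜 𝕜).smulRight v)).comp_clm f

theorem lp.norm_apply_sub_apply_le {ι E : Type*} [NormedAddCommGroup E] {p : ENNReal} (hp : p ≠ 0)
    (f : lp (fun _ : ι => E) p) (i j : ι) : ‖f i - f j‖ ≤ 2 * ‖f‖ :=
  calc ‖f i - f j‖ ≤ ‖f i‖ + ‖f j‖ := norm_sub_le _ _
    _ ≤ ‖f‖ + ‖f‖ := add_le_add (lp.norm_apply_le_norm hp f i) (lp.norm_apply_le_norm hp f j)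
    _ = 2 * ‖f‖ := by ring

variable (𝕜) in
def compactOperatorSubalgebra (E : Type*) [NormedAddCommGroup E] [NormedSpace 𝕜 E] :
    NonUnitalSubalgebra 𝕜 (E →L[𝕜] E) :=
  { compactOperator (RingHom.id 𝕜) E E with mul_mem' := fun ha _ => ha.comp_clm _ }

end General

lemma xiN_apply (i j : ℕ) : xiN i j = if j = i then 1 else 0 := by
  simp [xiN, lp.single_apply, Pi.single_apply]

lemma orthonormal_xiN : Orthonormal ℂ xiN :=
  orthonormal_iff_ite.2 fun i j => by
    simp [xiN, lp.inner_single_left, lp.single_apply, Pi.single_apply]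

lemma inner_xiN_left (i : ℕ) (f : HN) : inner ℂ (xiN i) f = f i := by
  simp [xiN, lp.inner_single_left]

lemma IsCompactOperator.tendsto_norm_apply_xiN {k : HN →L[ℂ] HN} (hk : IsCompactOperator k) :
    Tendsto (fun n => ‖k (xiN n)‖) atTop (𝓝 0) := by
  simpa using (hk.tendsto_apply_orthonormal orthonormal_xiN).norm

lemma EN_eq_rankOne (i j : ℕ) : EN i j = rankOne ℂ (xiN i) (xiN j) := rfl

lemma EN_apply (i j : ℕ) (x : HN) : EN i j x = x j • xiN i := by
  rw [← inner_xiN_left]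
  rfl

lemma EN_self_apply_xiN (i : ℕ) : EN i i (xiN i) = xiN i := by
  simp [EN_apply, xiN_apply]

lemma isSelfAdjoint_EN_self (i : ℕ) : IsSelfAdjoint (EN i i) :=
  (isStarProjection_rankOne_self (orthonormal_xiN.1 i)).isSelfAdjoint

lemma EN_self_mul_EN_self_comm (i j : ℕ) : EN i i * EN j j = EN j j * EN i i := by
  rcases eq_or_ne i j with rfl | h
  · rfl
  · simp only [EN_eq_rankOne, ContinuousLinearMap.mul_def, rankOne_comp_rankOne,
      orthonormal_iff_ite.1 orthonormal_xiN, if_neg h, if_neg h.symm, zero_smul]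

lemma isCompactOperator_EN (i j : ℕ) : IsCompactOperator (EN i j) :=
  ContinuousLinearMap.isCompactOperator_smulRight _ _

lemma EN_mem_C0S (i : ℕ) : EN i i ∈ C0S :=
  NonUnitalStarSubalgebra.le_topologicalClosure _
    (NonUnitalStarAlgebra.subset_adjoin ℂ _ ⟨i, rfl⟩)

lemma isCompactOperator_of_mem_C0S {x : HN →L[ℂ] HN} (hx : x ∈ C0S) : IsCompactOperator x := by
  have hgen : (Set.range fun i : ℕ => EN i i) ∪ star (Set.range fun i : ℕ => EN i i) ⊆
      (compactOperatorSubalgebra ℂ HN : Set (HN →L[ℂ] HN)) := by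
    rintro y (⟨i, rfl⟩ | ⟨i, hi⟩)
    · exact isCompactOperator_EN i i
    · rw [← star_star y, ← hi, (isSelfAdjoint_EN_self i).star_eq]
      exact isCompactOperator_EN i i
  exact closure_minimal (NonUnitalAlgebra.adjoin_le hgen) isClosed_setOfPred_isCompactOperator hx

lemma C0S_mul_comm {x y : HN →L[ℂ] HN} (hx : x ∈ C0S) (hy : y ∈ C0S) : x * y = y * x := by
  have hcc := NonUnitalStarSubalgebra.topologicalClosure_adjoin_le_centralizer_centralizer ℂ
    (Set.range fun i : ℕ => EN i i)
  have hc : C0S ≤ NonUnitalStarSubalgebra.centralizer ℂ (Set.range fun i : ℕ => EN i i) := by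
    refine NonUnitalStarSubalgebra.topologicalClosure_minimal _ ?_ (Set.isClosed_centralizer _)
    refine NonUnitalStarAlgebra.adjoin_le ?_
    rintro _ ⟨i, rfl⟩
    refine NonUnitalStarSubalgebra.mem_centralizer_iff ℂ |>.2 ?_
    rintro _ ⟨j, rfl⟩
    rw [(isSelfAdjoint_EN_self j).star_eq]
    exact ⟨EN_self_mul_EN_self_comm j i, EN_self_mul_EN_self_comm j i⟩
  exact ((NonUnitalStarSubalgebra.mem_centralizer_iff ℂ |>.1 (hcc hy)) x (hc hx)).1

lemma apply_xiN_eq_smul_of_commute {x : HN →L[ℂ] HN} (hx : ∀ i, EN i i * x = x * EN i i)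
    (i : ℕ) : x (xiN i) = x (xiN i) i • xiN i := by
  conv_lhs => rw [← EN_self_apply_xiN i, ← mul_apply_eq_comp, ← hx i]
  exact EN_apply i i _

section Diagonal

variable {y : HN →L[ℂ] HN} {μ : ℕ → ℂ}

lemma apply_eq_mul_of_apply_xiN_eq_smul (hy : ∀ i, y (xiN i) = μ i • xiN i) (ξ : HN) (m : ℕ) :
    y ξ m = μ m * ξ m := by
  have h : (innerSL ℂ (xiN m)).comp y = μ m • innerSL ℂ (xiN m) :=
    lp.continuousLinearMap_ext_single fun i => by
      change inner ℂ (xiN m) (y (xiN i)) = μ m * inner ℂ (xiN m) (xiN i)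
      rw [hy, inner_smul_right, orthonormal_iff_ite.1 orthonormal_xiN]
      split_ifs with h <;> simp [h]
  simpa [inner_xiN_left] using congr($h ξ)

lemma norm_le_of_apply_xiN_eq_smul (hy : ∀ i, y (xiN i) = μ i • xiN i) {s : ℝ} (hs : 0 ≤ s)
    (hμ : ∀ i, ‖μ i‖ ≤ s) : ‖y‖ ≤ s := by
  refine y.opNorm_le_bound hs fun ξ => ?_
  calc ‖y ξ‖ ≤ ‖(s : ℂ) • ξ‖ := lp.norm_mono two_ne_zero fun m => by
        rw [apply_eq_mul_of_apply_xiN_eq_smul hy, lp.coeFn_smul, Pi.smul_apply, norm_mul,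
          norm_smul, Complex.norm_real, Real.norm_of_nonneg hs]
        exact mul_le_mul_of_nonneg_right (hμ m) (norm_nonneg _)
    _ = s * ‖ξ‖ := by rw [norm_smul, Complex.norm_real, Real.norm_of_nonneg hs]

lemma sum_smul_EN_self_apply_xiN (t : Finset ℕ) (μ : ℕ → ℂ) (m : ℕ) :
    (∑ i ∈ t, μ i • EN i i) (xiN m) = (if m ∈ t then μ m else 0) • xiN m := by
  simp [EN_apply, xiN_apply, ite_smul]

lemma mem_C0S_of_apply_xiN_eq_smul (hy : ∀ i, y (xiN i) = μ i • xiN i)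
    (hμ : Tendsto μ atTop (𝓝 0)) : y ∈ C0S := by
  refine Metric.mem_closure_iff.2 fun ε hε => ?_
  obtain ⟨N, hN⟩ := Metric.tendsto_atTop.1 hμ (ε / 2) (half_pos hε)
  refine ⟨∑ i ∈ Finset.range N, μ i • EN i i,
    sum_mem fun i _ => SMulMemClass.smul_mem _ (NonUnitalStarAlgebra.subset_adjoin ℂ _ ⟨i, rfl⟩),
    ?_⟩
  have hdiag : ∀ m, (y - ∑ i ∈ Finset.range N, μ i • EN i i) (xiN m) =
      (if m ∈ Finset.range N then 0 else μ m) • xiN m := fun m => by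
    rw [sub_apply, hy, sum_smul_EN_self_apply_xiN, ← sub_smul]
    split_ifs <;> simp
  have hbound : ∀ m, ‖(if m ∈ Finset.range N then 0 else μ m : ℂ)‖ ≤ ε / 2 := fun m => by
    split_ifs with hm
    · simpa using (half_pos hε).le
    · simpa using (hN m (by simpa using hm)).le
  rw [dist_eq_norm]
  exact (norm_le_of_apply_xiN_eq_smul hdiag (half_pos hε).le hbound).trans_lt (half_lt_self hε)

end Diagonal

section Pairing

variable {u : HN →L[ℂ] HN} {iso : G2 ≃ ℕ} {V : H2 →L[ℂ] HN}

lemma apply_two_mul_eq_apply_two_mul_add_one (hu : IsHadamardPairing u)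
    (hV : ∀ g : G2, V (xi g) = xiN (2 * iso g)) (ζ : H2) (i : ℕ) :
    u (V ζ) (2 * i) = u (V ζ) (2 * i + 1) := by
  have h : (innerSL ℂ (xiN (2 * i))).comp (u.comp V) =
      (innerSL ℂ (xiN (2 * i + 1))).comp (u.comp V) :=
    lp.continuousLinearMap_ext_single fun g => by
      change inner ℂ (xiN (2 * i)) (u (V (xi g))) = inner ℂ (xiN (2 * i + 1)) (u (V (xi g)))
      rw [hV, hu.1, inner_smul_right_eq_smul, inner_smul_right_eq_smul, inner_add_right,
        inner_add_right]
      simp [orthonormal_iff_ite.1 orthonormal_xiN, show 2 * i ≠ 2 * iso g + 1 by omega,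
        show 2 * i + 1 ≠ 2 * iso g by omega]
  simpa [inner_xiN_left] using congr($h ζ)

lemma A0_apply_two_mul_sub (hu : IsHadamardPairing u) (hV : ∀ g : G2, V (xi g) = xiN (2 * iso g))
    (a : H2 →L[ℂ] H2) (k : HN →L[ℂ] HN) (ξ : HN) (i : ℕ) :
    (u * iotaV V a * u + k) ξ (2 * i) - (u * iotaV V a * u + k) ξ (2 * i + 1) =
      k ξ (2 * i) - k ξ (2 * i + 1) := by
  have hrow : (u * iotaV V a * u) ξ (2 * i) = (u * iotaV V a * u) ξ (2 * i + 1) :=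
    apply_two_mul_eq_apply_two_mul_add_one hu hV (a (V.adjoint (u ξ))) i
  change (u * iotaV V a * u) ξ (2 * i) + k ξ (2 * i) -
    ((u * iotaV V a * u) ξ (2 * i + 1) + k ξ (2 * i + 1)) = _
  rw [hrow]
  ring

end Pairing

lemma norm_apply_xiN_sub_of_apply_xiN_eq_smul {x : HN →L[ℂ] HN} {μ : ℕ → ℂ}
    (hx : ∀ i, x (xiN i) = μ i • xiN i) (n : ℕ) :
    ‖x (xiN n) (2 * (n / 2)) - x (xiN n) (2 * (n / 2) + 1)‖ = ‖μ n‖ := by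
  rw [apply_eq_mul_of_apply_xiN_eq_smul hx, apply_eq_mul_of_apply_xiN_eq_smul hx, xiN_apply,
    xiN_apply]
  obtain ⟨m, rfl | rfl⟩ := Nat.even_or_odd' n
  · simp [show 2 * m / 2 = m by omega]
  · simp [show (2 * m + 1) / 2 = m by omega]

lemma tendsto_zero_of_mem_A0car_of_apply_xiN_eq_smul {u : HN →L[ℂ] HN} (hu : IsHadamardPairing u)
    {lam : G2 → (H2 →L[ℂ] H2)} {iso : G2 ≃ ℕ} {V : H2 →L[ℂ] HN}
    (hV : ∀ g : G2, V (xi g) = xiN (2 * iso g)) {x : HN →L[ℂ] HN} (hx : x ∈ A0car lam V u)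
    {μ : ℕ → ℂ} (hxμ : ∀ i, x (xiN i) = μ i • xiN i) : Tendsto μ atTop (𝓝 0) := by
  obtain ⟨a, -, k, hk, rfl⟩ := hx
  refine squeeze_zero_norm (fun n => ?_) (by simpa using hk.tendsto_norm_apply_xiN.const_mul 2)
  rw [← norm_apply_xiN_sub_of_apply_xiN_eq_smul hxμ, A0_apply_two_mul_sub hu hV]
  exact lp.norm_apply_sub_apply_le two_ne_zero _ _ _

theorem stmt_16_general (u : HN →L[ℂ] HN) (hu : IsHadamardPairing u)
    (lam : G2 → (H2 →L[ℂ] H2)) (iso : G2 ≃ ℕ) (V : H2 →L[ℂ] HN)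
    (hV : ∀ g : G2, V (xi g) = xiN (2 * iso g)) :
    (¬∃ e ∈ A0car lam V u, ∀ x ∈ A0car lam V u, e * x = x ∧ x * e = x) ∧
    ((C0S : Set (HN →L[ℂ] HN)) ⊆ A0car lam V u) ∧
    (∀ x ∈ C0S, ∀ y ∈ C0S, x * y = y * x) ∧
    ∀ x ∈ A0car lam V u, (∀ c ∈ C0S, c * x = x * c) → x ∈ C0S := by
  have hC0S : (C0S : Set (HN →L[ℂ] HN)) ⊆ A0car lam V u := fun x hx =>
    ⟨0, zero_mem _, x, isCompactOperator_of_mem_C0S hx, by simp [iotaV]⟩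
  refine ⟨?_, hC0S, fun x hx y hy => C0S_mul_comm hx hy, fun x hx hcomm => ?_⟩
  · rintro ⟨e, he, hunit⟩
    have hfix : ∀ i, e (xiN i) = (1 : ℂ) • xiN i := fun i => by
      rw [one_smul, ← EN_self_apply_xiN i, ← mul_apply_eq_comp,
        (hunit _ (hC0S (EN_mem_C0S i))).1]
    exact one_ne_zero (tendsto_nhds_unique tendsto_const_nhds
      (tendsto_zero_of_mem_A0car_of_apply_xiN_eq_smul hu hV he hfix))
  · have hdiag := apply_xiN_eq_smul_of_commute fun i => hcomm _ (EN_mem_C0S i)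
    exact mem_C0S_of_apply_xiN_eq_smul hdiag
      (tendsto_zero_of_mem_A0car_of_apply_xiN_eq_smul hu hV hx hdiag)

/-- `A₀ = uBu + K(H)` is non-unital, and the diagonal algebra `C₀`
(generated by the `e_{ii}` without the identity) is a maximal abelian subalgebra
of `A₀`. -/
theorem stmt_16 (u : HN →L[ℂ] HN) (hu : IsHadamardPairing u)
    (lam : G2 → (H2 →L[ℂ] H2)) (hlam : ∀ g h : G2, lam g (xi h) = xi (g * h))
    (iso : G2 ≃ ℕ) (V : H2 →L[ℂ] HN) (hViso : Isometry V)
    (hV : ∀ g : G2, V (xi g) = xiN (2 * iso g)) :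
    (¬∃ e ∈ A0car lam V u, ∀ x ∈ A0car lam V u, e * x = x ∧ x * e = x) ∧
    ((C0S : Set (HN →L[ℂ] HN)) ⊆ A0car lam V u) ∧
    (∀ x ∈ C0S, ∀ y ∈ C0S, x * y = y * x) ∧
    ∀ x ∈ A0car lam V u, (∀ c ∈ C0S, c * x = x * c) → x ∈ C0S :=
  stmt_16_general u hu lam iso V hV
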